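/- arXiv:1509.06156 — 2 statements merged into one kernel-verified Lean document; each statement's English description precedes it below -/
import Mathlib

section
/- For real (or complex) x, y, z, ξ, η with all factors nonzero, [(1-yη)(1-zη) - xξ]^{-α} = [(1-xξ)(1-yη)(1-zη)]^{-α} ∑_{i,j≥0} (α)_{i+j}/(i! j!) σ₁^i σ₂^j, where σ₁ = xzξη/((1-xξ)(1-yη)(1-zη)) and σ₂ = xyξη/((1-xξ)(1-yη)), provided |σ₁| + |σ₂| < 1 so the double series converges absolutely. -/
/-- Real Pochhammer symbol `(x)_k`. -/
noncomputable def pochR (x : ℝ) (k : ℕ) : ℝ := (ascPochhammer ℝ k).eval x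

/-!
Clearing denominators gives `(1 - yη)(1 - zη) - xξ = (1 - xξ)(1 - yη)(1 - zη)(1 - σ₁ - σ₂)` with
`1 - σ₁ - σ₂ > 0`, so the power `-α` splits over this product. Grouping the double series along
the antidiagonals `i + j = n`, the binomial theorem collapses it to the one-variable binomial
series `∑ (α)_n (σ₁ + σ₂)ⁿ / n! = (1 - σ₁ - σ₂)^(-α)`. The same regrouping with absolute values
shows that the double series converges absolutely when `|σ₁| + |σ₂| < 1`, which justifies the
rearrangement.
-/

open Finset Nat

theorem Real.mem_eball_zero_one {t : ℝ} : t ∈ Metric.eball (0 : ℝ) 1 ↔ |t| < 1 := by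
  simp [← ofReal_norm]

theorem pochR_div_factorial_eq_choose (α : ℝ) (n : ℕ) :
    pochR α n / n ! = Ring.choose (α + n - 1) n := by
  rw [← Ring.multichoose_eq, eq_comm, eq_div_iff (by positivity), mul_comm, ← nsmul_eq_mul,
    Ring.factorial_nsmul_multichoose_eq_ascPochhammer, Polynomial.ascPochhammer_smeval_eq_eval,
    pochR]

theorem hasFPowerSeriesOnBall_one_sub_rpow_neg (α : ℝ) :
    HasFPowerSeriesOnBall (fun t ↦ (1 - t) ^ (-α))
      (.ofScalars ℝ fun n ↦ pochR α n / n !) 0 1 := by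
  simp_rw [pochR_div_factorial_eq_choose]
  refine (Real.one_div_one_sub_rpow_hasFPowerSeriesOnBall_zero α).congr fun t ht ↦ ?_
  have hlt : |t| < 1 := Real.mem_eball_zero_one.mp ht
  simp only [Real.rpow_neg (by grind : (0 : ℝ) ≤ 1 - t), one_div]

theorem hasSum_pochR_div_factorial_mul_pow (α : ℝ) {t : ℝ} (ht : |t| < 1) :
    HasSum (fun n ↦ pochR α n / n ! * t ^ n) ((1 - t) ^ (-α)) := by
  have := (hasFPowerSeriesOnBall_one_sub_rpow_neg α).hasSum (Real.mem_eball_zero_one.mpr ht)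
  simpa [FormalMultilinearSeries.ofScalars_apply_eq, mul_comm] using this

theorem summable_abs_pochR_div_factorial_mul_pow (α : ℝ) {t : ℝ} (ht : |t| < 1) :
    Summable (fun n ↦ |pochR α n| / n ! * |t| ^ n) := by
  have := FormalMultilinearSeries.summable_norm_apply _
    ((Real.mem_eball_zero_one.mpr ht).trans_le (hasFPowerSeriesOnBall_one_sub_rpow_neg α).r_le)
  simpa [FormalMultilinearSeries.ofScalars_apply_eq, abs_mul, abs_div, mul_comm] using this

-- For `x < 0`, `x ^ z = exp (z log x) cos (z π)`, and the cosine factor is unaffected by `y`.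
theorem Real.mul_rpow_of_nonneg_right {x y : ℝ} (hy : 0 ≤ y) (z : ℝ) :
    (x * y) ^ z = x ^ z * y ^ z := by
  rcases le_or_gt 0 x with hx | hx
  · exact Real.mul_rpow hx hy
  rcases hy.eq_or_lt with rfl | hy
  · rcases eq_or_ne z 0 with rfl | hz <;> simp [Real.zero_rpow, *]
  rw [Real.rpow_def_of_neg (mul_neg_of_neg_of_pos hx hy), Real.rpow_def_of_neg hx,
    Real.rpow_def_of_pos hy, Real.log_mul hx.ne hy.ne', add_mul, Real.exp_add]
  ring

theorem sum_antidiagonal_div_factorial_mul_pow_mul_pow {K : Type*} [Field K] [CharZero K]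
    (c : ℕ → K) (a b : K) (n : ℕ) :
    ∑ p ∈ antidiagonal n, c (p.1 + p.2) / (p.1 ! * p.2 !) * a ^ p.1 * b ^ p.2 =
      c n / n ! * (a + b) ^ n := by
  rw [(Commute.all a b).add_pow', mul_sum]
  refine sum_congr rfl fun p hp ↦ ?_
  rw [HasAntidiagonal.mem_antidiagonal] at hp
  subst hp
  have : ((p.1 + p.2)! : K) ≠ 0 := mod_cast factorial_ne_zero _
  rw [nsmul_eq_mul, Nat.cast_add_choose]
  field_simp

section Antidiagonal

variable {A E : Type*} [AddCommMonoid A] [HasAntidiagonal A]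

theorem summable_of_summable_sum_antidiagonal_of_nonneg {F : A × A → ℝ} (hF : 0 ≤ F)
    (h : Summable fun n ↦ ∑ p ∈ antidiagonal n, F p) : Summable F := by
  rw [← HasAntidiagonal.sigmaAntidiagonalEquivProd.summable_iff]
  refine (summable_sigma_of_nonneg fun _ ↦ hF _).mpr ⟨fun _ ↦ .of_finite, ?_⟩
  refine h.congr fun n ↦ ?_
  rw [← Finset.tsum_subtype]
  rfl

theorem Summable.tsum_eq_tsum_sum_antidiagonal [AddCommMonoid E] [TopologicalSpace E]
    [ContinuousAdd E] [T3Space E] {F : A × A → E} (hF : Summable F) :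
    ∑' p, F p = ∑' n, ∑ p ∈ antidiagonal n, F p := by
  rw [← HasAntidiagonal.sigmaAntidiagonalEquivProd.tsum_eq F]
  refine ((HasAntidiagonal.sigmaAntidiagonalEquivProd.summable_iff.mpr hF).tsum_sigma'
    fun _ ↦ .of_finite).trans (tsum_congr fun n ↦ ?_)
  rw [← Finset.tsum_subtype]
  rfl

end Antidiagonal

theorem hasSum_pochR_add_div_factorial_mul_pow_mul_pow (α : ℝ) {a b : ℝ} (hab : |a| + |b| < 1) :
    HasSum (fun p : ℕ × ℕ ↦ pochR α (p.1 + p.2) / (p.1 ! * p.2 !) * a ^ p.1 * b ^ p.2)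
      ((1 - (a + b)) ^ (-α)) := by
  have habs_eq : (fun p : ℕ × ℕ ↦ |pochR α (p.1 + p.2) / (p.1 ! * p.2 !) * a ^ p.1 * b ^ p.2|) =
      fun p ↦ |pochR α (p.1 + p.2)| / (p.1 ! * p.2 !) * |a| ^ p.1 * |b| ^ p.2 := by
    ext p
    simp [abs_mul, abs_div]
  have hsummable : Summable fun p : ℕ × ℕ ↦
      pochR α (p.1 + p.2) / (p.1 ! * p.2 !) * a ^ p.1 * b ^ p.2 := by
    refine .of_abs (habs_eq ▸ summable_of_summable_sum_antidiagonal_of_nonneg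
      (fun _ ↦ by positivity) ?_)
    simp_rw [sum_antidiagonal_div_factorial_mul_pow_mul_pow fun n ↦ |pochR α n|]
    simpa [abs_of_nonneg (by positivity : 0 ≤ |a| + |b|)] using
      summable_abs_pochR_div_factorial_mul_pow α (t := |a| + |b|)
        (by rwa [abs_of_nonneg (by positivity)])
  convert hsummable.hasSum using 1
  rw [hsummable.tsum_eq_tsum_sum_antidiagonal,
    ← (hasSum_pochR_div_factorial_mul_pow α ((abs_add_le a b).trans_lt hab)).tsum_eq]
  simp_rw [sum_antidiagonal_div_factorial_mul_pow_mul_pow (pochR α)]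

theorem binomial_expansion_two_var_general (α x y z ξ η : ℝ)
    (h1 : 1 - x * ξ ≠ 0) (h2 : 1 - y * η ≠ 0) (h3 : 1 - z * η ≠ 0)
    (σ₁ σ₂ : ℝ)
    (hσ₁ : σ₁ = x * z * ξ * η / ((1 - x * ξ) * (1 - y * η) * (1 - z * η)))
    (hσ₂ : σ₂ = x * y * ξ * η / ((1 - x * ξ) * (1 - y * η)))
    (hconv : |σ₁| + |σ₂| < 1) :
    ((1 - y * η) * (1 - z * η) - x * ξ) ^ (-α) =
      ((1 - x * ξ) * (1 - y * η) * (1 - z * η)) ^ (-α) *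
        ∑' i : ℕ, ∑' j : ℕ,
          pochR α (i + j) / ((Nat.factorial i : ℝ) * (Nat.factorial j : ℝ)) *
            σ₁ ^ i * σ₂ ^ j := by
  have hσ₁' : σ₁ * ((1 - x * ξ) * (1 - y * η) * (1 - z * η)) = x * z * ξ * η := by
    rw [hσ₁, div_mul_cancel₀ _ (mul_ne_zero (mul_ne_zero h1 h2) h3)]
  have hσ₂' : σ₂ * ((1 - x * ξ) * (1 - y * η)) = x * y * ξ * η := by
    rw [hσ₂, div_mul_cancel₀ _ (mul_ne_zero h1 h2)]
  have hfactor : (1 - y * η) * (1 - z * η) - x * ξ =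
      (1 - x * ξ) * (1 - y * η) * (1 - z * η) * (1 - (σ₁ + σ₂)) := by
    linear_combination hσ₁' + (1 - z * η) * hσ₂'
  have hseries := hasSum_pochR_add_div_factorial_mul_pow_mul_pow α hconv
  have hpos : 0 ≤ 1 - (σ₁ + σ₂) := by
    linarith [(abs_add_le σ₁ σ₂).trans_lt hconv, le_abs_self (σ₁ + σ₂)]
  rw [hfactor, Real.mul_rpow_of_nonneg_right hpos, ← hseries.tsum_eq,
    hseries.summable.tsum_prod' fun i ↦ hseries.summable.prod_factor i]

/-- Equation (5.2): the two-variable binomial expansion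
`[(1-yη)(1-zη) - xξ]^{-α} = [(1-xξ)(1-yη)(1-zη)]^{-α} ∑_{i,j} (α)_{i+j}/(i!j!) σ₁^i σ₂^j`. -/
theorem binomial_expansion_two_var (α x y z ξ η : ℝ)
    (h1 : 1 - x * ξ ≠ 0) (h2 : 1 - y * η ≠ 0) (h3 : 1 - z * η ≠ 0)
    (h4 : (1 - y * η) * (1 - z * η) - x * ξ ≠ 0)
    (σ₁ σ₂ : ℝ)
    (hσ₁ : σ₁ = x * z * ξ * η / ((1 - x * ξ) * (1 - y * η) * (1 - z * η)))
    (hσ₂ : σ₂ = x * y * ξ * η / ((1 - x * ξ) * (1 - y * η)))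
    (hconv : |σ₁| + |σ₂| < 1) :
    ((1 - y * η) * (1 - z * η) - x * ξ) ^ (-α) =
      ((1 - x * ξ) * (1 - y * η) * (1 - z * η)) ^ (-α) *
        ∑' i : ℕ, ∑' j : ℕ,
          pochR α (i + j) / ((Nat.factorial i : ℝ) * (Nat.factorial j : ℝ)) *
            σ₁ ^ i * σ₂ ^ j :=
  binomial_expansion_two_var_general α x y z ξ η h1 h2 h3 σ₁ σ₂ hσ₁ hσ₂ hconv
end

section
/- For Re(α) > 0, Re(β₁) > 0, Re(β₂) > 0 and x, y, z small, H_B(α, β₁, β₂; γ₁, γ₂, γ₃; x, y, z) = [1/(Γ(α)Γ(β₁)Γ(β₂))] ∫₀^∞∫₀^∞∫₀^∞ e^{-ξ-η-ζ} ξ^{α-1} η^{β₁-1} ζ^{β₂-1} ₀F₁(γ₁; xξη) ₀F₁(γ₂; yηζ) ₀F₁(γ₃; zξζ) dξ dη dζ. -/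
open Complex MeasureTheory

/-- Pochhammer symbol `(x)_k`. -/
noncomputable def poch (x : ℂ) (k : ℕ) : ℂ := (ascPochhammer ℂ k).eval x

/-- Srivastava's triple hypergeometric function `H_B`. -/
noncomputable def srivastavaHB (α β₁ β₂ γ₁ γ₂ γ₃ : ℂ) (x y z : ℝ) : ℂ :=
  ∑' m : ℕ, ∑' n : ℕ, ∑' p : ℕ,
    poch α (m + p) * poch β₁ (m + n) * poch β₂ (n + p) *
      (x : ℂ) ^ m * (y : ℂ) ^ n * (z : ℂ) ^ p /
      (poch γ₁ m * poch γ₂ n * poch γ₃ p *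
        (Nat.factorial m : ℂ) * (Nat.factorial n : ℂ) * (Nat.factorial p : ℂ))

/-- The confluent hypergeometric limit function `₀F₁(c; t)`. -/
noncomputable def hyp0F1 (c : ℂ) (t : ℝ) : ℂ :=
  ∑' k : ℕ, (t : ℂ) ^ k / (poch c k * (Nat.factorial k : ℂ))

open Set Filter Nat

/-! Expand each `₀F₁` factor in its power series. For `ξ, η, ζ > 0` the integrand becomes a triple
series whose `(m, n, p)` term is a multiple of
`e^{-ξ} ξ^{α+m+p-1} · e^{-η} η^{β₁+m+n-1} · e^{-ζ} ζ^{β₂+n+p-1}`, which integrates to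
`Γ(α+m+p) Γ(β₁+m+n) Γ(β₂+n+p) = (α)_{m+p} (β₁)_{m+n} (β₂)_{n+p} Γ(α) Γ(β₁) Γ(β₂)`.
Integrating termwise is Fubini on the product of the three half-lines. It is justified because
`|(γ)_k| ≥ δ^k k!` and `Γ(a+m+n) ≤ Γ(a) (2a+2)^{m+n} m! n!`, so the series of integrals of
absolute values is dominated by a product of three geometric series once `|x|, |y|, |z|` are small.
-/

section Fubini

variable {α β γ ι E 𝕜 : Type*} [MeasurableSpace α] [MeasurableSpace β] [MeasurableSpace γ]
  [Countable ι]

theorem integrable_tsum_of_summable_integral_norm [NormedAddCommGroup E] [CompleteSpace E]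
    [SecondCountableTopology E] [MeasurableSpace E] [BorelSpace E] {μ : Measure α}
    {F : ι → α → E} (hF : ∀ i, Integrable (F i) μ)
    (hsum : Summable fun i => ∫ a, ‖F i a‖ ∂μ) :
    Integrable (fun a => ∑' i, F i a) μ := by
  refine ⟨(AEMeasurable.tsum fun i => (hF i).aemeasurable).aestronglyMeasurable, ?_⟩
  rw [hasFiniteIntegral_iff_enorm]
  calc ∫⁻ a, ‖∑' i, F i a‖ₑ ∂μ ≤ ∫⁻ a, ∑' i, ‖F i a‖ₑ ∂μ :=
        lintegral_mono fun a => enorm_tsum_le_tsum_enorm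
    _ = ∑' i, ENNReal.ofReal (∫ a, ‖F i a‖ ∂μ) := by
        rw [lintegral_tsum fun i => (hF i).aemeasurable.enorm]
        simp only [ofReal_integral_norm_eq_lintegral_enorm (hF _)]
    _ < ⊤ := by
        rw [← ENNReal.ofReal_tsum_of_nonneg (fun i => integral_nonneg fun a => norm_nonneg _) hsum]
        exact ENNReal.ofReal_lt_top

theorem integral_prod_prod_mul [RCLike 𝕜] {μ : Measure α} {ν : Measure β} {ρ : Measure γ}
    [SFinite μ] [SFinite ν] [SFinite ρ] (f : α → 𝕜) (g : β → 𝕜) (h : γ → 𝕜) :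
    ∫ w, f w.1 * (g w.2.1 * h w.2.2) ∂(μ.prod (ν.prod ρ)) =
      (∫ a, f a ∂μ) * (∫ b, g b ∂ν) * ∫ z, h z ∂ρ := by
  rw [mul_assoc, ← integral_prod_mul]
  exact integral_prod_mul f (fun q : β × γ => g q.1 * h q.2)

theorem hasSum_integral_integral_integral_tsum [RCLike 𝕜] {μ : Measure α} {ν : Measure β}
    {ρ : Measure γ} [SFinite μ] [SFinite ν] [SFinite ρ] (c : ι → 𝕜) {f : ι → α → 𝕜}
    {g : ι → β → 𝕜} {h : ι → γ → 𝕜} (hf : ∀ i, Integrable (f i) μ)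
    (hg : ∀ i, Integrable (g i) ν) (hh : ∀ i, Integrable (h i) ρ)
    (hsum : Summable fun i =>
      ‖c i‖ * (∫ a, ‖f i a‖ ∂μ) * (∫ b, ‖g i b‖ ∂ν) * ∫ z, ‖h i z‖ ∂ρ) :
    HasSum (fun i => c i * (∫ a, f i a ∂μ) * (∫ b, g i b ∂ν) * ∫ z, h i z ∂ρ)
      (∫ a, ∫ b, ∫ z, ∑' i, c i * f i a * g i b * h i z ∂ρ ∂ν ∂μ) := by
  set T : ι → α × β × γ → 𝕜 := fun i w => c i * (f i w.1 * (g i w.2.1 * h i w.2.2))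
  have hT i : Integrable (T i) (μ.prod (ν.prod ρ)) :=
    ((hf i).mul_prod ((hg i).mul_prod (hh i))).const_mul (c i)
  have hTsum : Summable fun i => ∫ w, ‖T i w‖ ∂(μ.prod (ν.prod ρ)) := by
    refine hsum.congr fun i => ?_
    simp only [T, norm_mul, integral_const_mul]
    rw [integral_prod_prod_mul (fun a => ‖f i a‖) (fun b => ‖g i b‖) (fun z => ‖h i z‖)]
    ring
  have hTint i : ∫ w, T i w ∂(μ.prod (ν.prod ρ)) =
      c i * (∫ a, f i a ∂μ) * (∫ b, g i b ∂ν) * ∫ z, h i z ∂ρ := by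
    rw [integral_const_mul, integral_prod_prod_mul]
    ring
  have hF := integrable_tsum_of_summable_integral_norm hT hTsum
  have hiter : (∫ a, ∫ b, ∫ z, ∑' i, c i * f i a * g i b * h i z ∂ρ ∂ν ∂μ) =
      ∫ w, ∑' i, T i w ∂(μ.prod (ν.prod ρ)) := by
    rw [integral_prod _ hF]
    refine integral_congr_ae ?_
    filter_upwards [hF.prod_right_ae] with a ha
    rw [integral_prod _ ha]
    simp only [T, mul_assoc]
  rw [hiter, ← funext hTint]
  exact hasSum_integral_of_summable_integral_norm hT hTsum

end Fubini

noncomputable def gammaKernel (s : ℂ) (t : ℝ) : ℂ := (Real.exp (-t) : ℂ) * (t : ℂ) ^ (s - 1)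

section GammaKernel

variable {s : ℂ}

theorem gammaKernel_add_natCast {t : ℝ} (ht : 0 < t) (k : ℕ) :
    gammaKernel (s + k) t = gammaKernel s t * (t : ℂ) ^ k := by
  rw [gammaKernel, gammaKernel, mul_assoc, ← cpow_natCast,
    ← cpow_add _ _ (ofReal_ne_zero.2 ht.ne'), sub_add_eq_add_sub]

theorem integrableOn_gammaKernel (hs : 0 < s.re) : IntegrableOn (gammaKernel s) (Ioi 0) :=
  GammaIntegral_convergent hs

theorem integral_gammaKernel (hs : 0 < s.re) : ∫ t in Ioi 0, gammaKernel s t = Gamma s :=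
  (Gamma_eq_integral hs).symm

theorem integral_norm_gammaKernel (hs : 0 < s.re) :
    ∫ t in Ioi 0, ‖gammaKernel s t‖ = Real.Gamma s.re := by
  rw [Real.Gamma_eq_integral hs]
  refine setIntegral_congr_fun measurableSet_Ioi fun t (ht : 0 < t) => ?_
  rw [gammaKernel, norm_mul, norm_real, Real.norm_of_nonneg (Real.exp_pos _).le,
    norm_cpow_eq_rpow_re_of_pos ht, sub_re, one_re]

theorem hasSum_setIntegral_Ioi_gammaKernel {ι : Type*} [Countable ι] (c : ι → ℂ)
    {s₁ s₂ s₃ : ℂ} (h₁ : 0 < s₁.re) (h₂ : 0 < s₂.re) (h₃ : 0 < s₃.re) (k₁ k₂ k₃ : ι → ℕ)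
    (hsum : Summable fun i => ‖c i‖ * Real.Gamma (s₁.re + k₁ i) *
      Real.Gamma (s₂.re + k₂ i) * Real.Gamma (s₃.re + k₃ i)) :
    HasSum (fun i => c i * Gamma (s₁ + k₁ i) * Gamma (s₂ + k₂ i) * Gamma (s₃ + k₃ i))
      (∫ ξ in Ioi 0, ∫ η in Ioi 0, ∫ ζ in Ioi 0, ∑' i,
        c i * gammaKernel (s₁ + k₁ i) ξ * gammaKernel (s₂ + k₂ i) η *
          gammaKernel (s₃ + k₃ i) ζ) := by
  have hre {s : ℂ} (hs : 0 < s.re) (k : ℕ) : 0 < (s + k).re := by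
    rw [add_re, natCast_re]; positivity
  have key := hasSum_integral_integral_integral_tsum c
    (fun i => integrableOn_gammaKernel (hre h₁ (k₁ i)))
    (fun i => integrableOn_gammaKernel (hre h₂ (k₂ i)))
    (fun i => integrableOn_gammaKernel (hre h₃ (k₃ i)))
    (by simpa only [integral_norm_gammaKernel (hre _ _), add_re, natCast_re, h₁, h₂, h₃] using hsum)
  simpa only [integral_gammaKernel (hre _ _), h₁, h₂, h₃] using key

end GammaKernel

theorem exists_pos_forall_le_of_eventually_le {f : ℕ → ℝ} (hf : ∀ n, 0 < f n) {c : ℝ}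
    (hc : 0 < c) (h : ∀ᶠ n in atTop, c ≤ f n) : ∃ δ > 0, ∀ n, δ ≤ f n := by
  obtain ⟨N, hN⟩ := eventually_atTop.1 h
  obtain ⟨j, -, hj⟩ := (Finset.range (N + 1)).exists_min_image f Finset.nonempty_range_add_one
  refine ⟨min c (f j), lt_min hc (hf j), fun n => ?_⟩
  rcases le_or_gt N n with hn | hn
  · exact (min_le_left _ _).trans (hN n hn)
  · exact (min_le_right _ _).trans (hj n (Finset.mem_range.2 (hn.trans N.lt_add_one)))

theorem poch_succ (x : ℂ) (k : ℕ) : poch x (k + 1) = poch x k * (x + k) := by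
  simp [poch, ascPochhammer_succ_right]

theorem Gamma_add_natCast_eq_poch_mul {s : ℂ} (hs : 0 < s.re) (k : ℕ) :
    Gamma (s + k) = poch s k * Gamma s := by
  rw [poch, ← Gamma_add_nat_div_Gamma_eq s, div_mul_cancel₀ _ (Gamma_ne_zero_of_re_pos hs)]
  rintro k rfl
  exact absurd hs (by simp)

theorem exists_pos_mul_succ_le_norm_add_natCast (γ : ℂ) :
    ∃ δ > 0, ∀ j : ℕ, γ + j ≠ 0 → δ * (j + 1) ≤ ‖γ + j‖ := by
  let f : ℕ → ℝ := fun j => if γ + j = 0 then 1 else ‖γ + j‖ / (j + 1)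
  have hf j : 0 < f j := by
    by_cases h : γ + j = 0
    · simp [f, h]
    · simp only [f, h, if_false]
      have := norm_pos_iff.2 h
      positivity
  have hlarge : ∀ᶠ j : ℕ in atTop, 1 / 2 ≤ f j := by
    filter_upwards [eventually_ge_atTop ⌈2 * ‖γ‖ + 1⌉₊] with j hj
    have hj' : 2 * ‖γ‖ + 1 ≤ j := Nat.ceil_le.1 hj
    have htri : (j : ℝ) ≤ ‖γ + j‖ + ‖γ‖ := by simpa using norm_sub_le (γ + j) γ
    by_cases h : γ + j = 0
    · simp only [f, h, if_true]
      norm_num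
    · simp only [f, h, if_false]
      rw [le_div_iff₀ (by positivity)]
      linarith
  obtain ⟨δ, hδ, hδf⟩ := exists_pos_forall_le_of_eventually_le hf one_half_pos hlarge
  refine ⟨δ, hδ, fun j hj => ?_⟩
  have := hδf j
  simp only [f, hj, if_false] at this
  rwa [le_div_iff₀ (by positivity)] at this

theorem pow_mul_factorial_le_norm_poch {γ : ℂ} {δ : ℝ} (hδ : 0 ≤ δ)
    (h : ∀ j : ℕ, γ + j ≠ 0 → δ * (j + 1) ≤ ‖γ + j‖) {k : ℕ} (hk : poch γ k ≠ 0) :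
    δ ^ k * k ! ≤ ‖poch γ k‖ := by
  induction k with
  | zero => simp [poch]
  | succ k ih =>
    rw [poch_succ] at hk ⊢
    have hk' := mul_ne_zero_iff.1 hk
    rw [norm_mul, pow_succ, factorial_succ, cast_mul, cast_succ]
    calc δ ^ k * δ * ((k + 1) * k !) = δ ^ k * k ! * (δ * (k + 1)) := by ring
      _ ≤ ‖poch γ k‖ * ‖γ + k‖ := by gcongr; exacts [ih hk'.1, h k hk'.2]

noncomputable def hyp0F1Term (c : ℂ) (t : ℝ) (k : ℕ) : ℂ :=
  (t : ℂ) ^ k / (poch c k * (k ! : ℂ))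

theorem hyp0F1_mul_eq_tsum (c : ℂ) (x t : ℝ) :
    hyp0F1 c (x * t) = ∑' k, hyp0F1Term c x k * (t : ℂ) ^ k :=
  tsum_congr fun k => by rw [hyp0F1Term, ofReal_mul, mul_pow, mul_div_right_comm]

theorem exists_norm_hyp0F1Term_le (c : ℂ) :
    ∃ ρ > 0, ∀ x k, ‖hyp0F1Term c x k‖ ≤ (ρ * |x|) ^ k / (k ! : ℝ) ^ 2 := by
  obtain ⟨δ, hδ, h⟩ := exists_pos_mul_succ_le_norm_add_natCast c
  refine ⟨δ⁻¹, inv_pos.2 hδ, fun x k => ?_⟩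
  by_cases hk : poch c k = 0
  -- then the term is a division by zero, hence `0`
  · simp only [hyp0F1Term, hk, zero_mul, div_zero, norm_zero]
    positivity
  have hpoch := pow_mul_factorial_le_norm_poch hδ.le h hk
  have hfac : (0 : ℝ) < k ! := mod_cast k.factorial_pos
  rw [hyp0F1Term, norm_div, norm_mul, norm_pow, norm_real, norm_natCast, Real.norm_eq_abs,
    div_le_div_iff₀ (by positivity) (by positivity)]
  calc |x| ^ k * (k ! : ℝ) ^ 2 = (δ⁻¹ * |x|) ^ k * (δ ^ k * k ! * k !) := by
        rw [mul_pow, inv_pow]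
        field_simp
    _ ≤ (δ⁻¹ * |x|) ^ k * (‖poch c k‖ * k !) := by gcongr

theorem summable_norm_hyp0F1Term_mul_pow (c : ℂ) (x t : ℝ) :
    Summable fun k => ‖hyp0F1Term c x k * (t : ℂ) ^ k‖ := by
  obtain ⟨ρ, hρ, h⟩ := exists_norm_hyp0F1Term_le c
  refine .of_nonneg_of_le (fun k => norm_nonneg _) (fun k => ?_)
    (Real.summable_pow_div_factorial (ρ * |x| * |t|))
  have hfac : (1 : ℝ) ≤ k ! := mod_cast k.factorial_pos
  rw [norm_mul, norm_pow, norm_real, Real.norm_eq_abs, mul_pow]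
  calc ‖hyp0F1Term c x k‖ * |t| ^ k ≤ (ρ * |x|) ^ k / (k ! : ℝ) ^ 2 * |t| ^ k := by
        gcongr; exact h x k
    _ ≤ (ρ * |x|) ^ k * |t| ^ k / k ! := by
        rw [div_mul_eq_mul_div]
        exact div_le_div_of_nonneg_left (by positivity) (by positivity)
          (le_self_pow₀ hfac two_ne_zero)

theorem exists_summable_norm_hyp0F1Term_mul_factorial_sq (c : ℂ) {S : ℝ} (hS : 0 ≤ S) :
    ∃ ε > 0, ∀ x : ℝ, |x| < ε →
      Summable fun k => ‖hyp0F1Term c x k‖ * (S ^ k * (k ! : ℝ) ^ 2) := by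
  obtain ⟨ρ, hρ, h⟩ := exists_norm_hyp0F1Term_le c
  refine ⟨(ρ * S + 1)⁻¹, by positivity, fun x hx => ?_⟩
  have hratio : ρ * |x| * S < 1 := by
    have := mul_lt_mul_of_pos_right hx (show 0 < ρ * S + 1 by positivity)
    rw [inv_mul_cancel₀ (by positivity)] at this
    nlinarith [abs_nonneg x]
  refine .of_nonneg_of_le (fun k => by positivity) (fun k => ?_)
    (summable_geometric_of_lt_one (by positivity) hratio)
  have hfac : (k ! : ℝ) ≠ 0 := mod_cast k.factorial_ne_zero
  calc ‖hyp0F1Term c x k‖ * (S ^ k * (k ! : ℝ) ^ 2)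
      ≤ (ρ * |x|) ^ k / (k ! : ℝ) ^ 2 * (S ^ k * (k ! : ℝ) ^ 2) := by gcongr; exact h x k
    _ = (ρ * |x| * S) ^ k := by rw [mul_pow _ S]; field_simp

theorem Real.Gamma_add_natCast_le {a : ℝ} (ha : 0 < a) (k : ℕ) :
    Real.Gamma (a + k) ≤ Real.Gamma a * ((a + 1) ^ k * k !) := by
  induction k with
  | zero => simp
  | succ k ih =>
    rw [cast_succ, ← add_assoc, Real.Gamma_add_one (by positivity), pow_succ, factorial_succ,
      cast_mul, cast_succ]
    calc (a + k) * Real.Gamma (a + k)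
        ≤ ((a + 1) * (k + 1)) * (Real.Gamma a * ((a + 1) ^ k * k !)) := by
          gcongr
          nlinarith [(k.cast_nonneg : (0 : ℝ) ≤ k)]
      _ = Real.Gamma a * ((a + 1) ^ k * (a + 1) * ((k + 1) * k !)) := by ring

theorem Nat.factorial_add_le (m n : ℕ) : (m + n)! ≤ 2 ^ (m + n) * (m ! * n !) := by
  rw [← add_choose_mul_factorial_mul_factorial m n, mul_assoc]
  exact Nat.mul_le_mul_right _ (choose_le_two_pow _ _)

theorem Real.Gamma_add_add_le {a : ℝ} (ha : 0 < a) (m n : ℕ) :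
    Real.Gamma (a + (m + n : ℕ)) ≤
      Real.Gamma a * ((2 * (a + 1)) ^ m * m !) * ((2 * (a + 1)) ^ n * n !) := by
  calc Real.Gamma (a + (m + n : ℕ)) ≤ Real.Gamma a * ((a + 1) ^ (m + n) * (m + n)!) :=
        Real.Gamma_add_natCast_le ha _
    _ ≤ Real.Gamma a * ((a + 1) ^ (m + n) * (2 ^ (m + n) * (m ! * n !))) := by
        gcongr
        exact_mod_cast Nat.factorial_add_le m n
    _ = _ := by rw [mul_pow, mul_pow, pow_add, pow_add]; ring

theorem tsum_mul_tsum_mul_tsum_of_summable_norm {R ι ι' ι'' : Type*} [NormedRing R]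
    [CompleteSpace R] {f : ι → R} {g : ι' → R} {h : ι'' → R} (hf : Summable fun i => ‖f i‖)
    (hg : Summable fun j => ‖g j‖) (hh : Summable fun k => ‖h k‖) :
    (∑' i, f i) * ((∑' j, g j) * ∑' k, h k) =
      ∑' w : ι × ι' × ι'', f w.1 * (g w.2.1 * h w.2.2) := by
  rw [tsum_mul_tsum_of_summable_norm hg hh, tsum_mul_tsum_of_summable_norm hf (hg.mul_norm hh)]

theorem HasSum.tsum_tsum_tsum_eq {ι ι' ι'' E : Type*} [NormedAddCommGroup E] [CompleteSpace E]
    {f : ι × ι' × ι'' → E} {a : E} (hf : HasSum f a) :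
    ∑' i, ∑' j, ∑' k, f (i, j, k) = a := by
  rw [← hf.tsum_eq, hf.summable.tsum_prod]
  exact tsum_congr fun i => ((hf.summable.prod_factor i).tsum_prod).symm

theorem exists_summable_norm_hyp0F1Term_mul_Gamma (γ₁ γ₂ γ₃ : ℂ) {a b c : ℝ} (ha : 0 < a)
    (hb : 0 < b) (hc : 0 < c) :
    ∃ ε > 0, ∀ x y z : ℝ, |x| < ε → |y| < ε → |z| < ε →
      Summable fun i : ℕ × ℕ × ℕ =>
        ‖hyp0F1Term γ₁ x i.1 * hyp0F1Term γ₂ y i.2.1 * hyp0F1Term γ₃ z i.2.2‖ *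
          Real.Gamma (a + ↑(i.1 + i.2.2)) * Real.Gamma (b + ↑(i.1 + i.2.1)) *
          Real.Gamma (c + ↑(i.2.1 + i.2.2)) := by
  obtain ⟨A, hA, hΓa⟩ : ∃ A ≥ 0, ∀ m n : ℕ,
      Real.Gamma (a + ↑(m + n)) ≤ Real.Gamma a * (A ^ m * m !) * (A ^ n * n !) :=
    ⟨_, by positivity, Real.Gamma_add_add_le ha⟩
  obtain ⟨B, hB, hΓb⟩ : ∃ B ≥ 0, ∀ m n : ℕ,
      Real.Gamma (b + ↑(m + n)) ≤ Real.Gamma b * (B ^ m * m !) * (B ^ n * n !) :=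
    ⟨_, by positivity, Real.Gamma_add_add_le hb⟩
  obtain ⟨C, hC, hΓc⟩ : ∃ C ≥ 0, ∀ m n : ℕ,
      Real.Gamma (c + ↑(m + n)) ≤ Real.Gamma c * (C ^ m * m !) * (C ^ n * n !) :=
    ⟨_, by positivity, Real.Gamma_add_add_le hc⟩
  obtain ⟨ε₁, hε₁, h₁⟩ := exists_summable_norm_hyp0F1Term_mul_factorial_sq γ₁ (mul_nonneg hA hB)
  obtain ⟨ε₂, hε₂, h₂⟩ := exists_summable_norm_hyp0F1Term_mul_factorial_sq γ₂ (mul_nonneg hB hC)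
  obtain ⟨ε₃, hε₃, h₃⟩ := exists_summable_norm_hyp0F1Term_mul_factorial_sq γ₃ (mul_nonneg hA hC)
  refine ⟨min ε₁ (min ε₂ ε₃), by positivity, fun x y z hx hy hz => ?_⟩
  simp only [lt_min_iff] at hx hy hz
  have hdom := ((h₁ x hx.1).mul_of_nonneg ((h₂ y hy.2.1).mul_of_nonneg (h₃ z hz.2.2)
    (fun _ => by positivity) (fun _ => by positivity)) (fun _ => by positivity)
    (fun _ => by positivity)).mul_left (Real.Gamma a * Real.Gamma b * Real.Gamma c)
  refine .of_nonneg_of_le (fun i => by positivity) (fun ⟨m, n, p⟩ => ?_) hdom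
  calc ‖hyp0F1Term γ₁ x m * hyp0F1Term γ₂ y n * hyp0F1Term γ₃ z p‖ *
        Real.Gamma (a + ↑(m + p)) * Real.Gamma (b + ↑(m + n)) * Real.Gamma (c + ↑(n + p))
      ≤ ‖hyp0F1Term γ₁ x m‖ * ‖hyp0F1Term γ₂ y n‖ * ‖hyp0F1Term γ₃ z p‖ *
        (Real.Gamma a * (A ^ m * m !) * (A ^ p * p !)) *
        (Real.Gamma b * (B ^ m * m !) * (B ^ n * n !)) *
        (Real.Gamma c * (C ^ n * n !) * (C ^ p * p !)) := by
        rw [norm_mul, norm_mul]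
        gcongr
        exacts [hΓa m p, hΓb m n, hΓc n p]
    _ = Real.Gamma a * Real.Gamma b * Real.Gamma c *
        (‖hyp0F1Term γ₁ x m‖ * ((A * B) ^ m * (m ! : ℝ) ^ 2) *
          (‖hyp0F1Term γ₂ y n‖ * ((B * C) ^ n * (n ! : ℝ) ^ 2) *
            (‖hyp0F1Term γ₃ z p‖ * ((A * C) ^ p * (p ! : ℝ) ^ 2)))) := by
        ring

theorem setIntegral_Ioi_hyp0F1_eq_tsum (α β₁ β₂ γ₁ γ₂ γ₃ : ℂ) (x y z : ℝ) :
    (∫ ξ in Ioi (0:ℝ), ∫ η in Ioi (0:ℝ), ∫ ζ in Ioi (0:ℝ),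
      (Real.exp (-ξ - η - ζ) : ℂ) * (ξ : ℂ) ^ (α - 1) * (η : ℂ) ^ (β₁ - 1) *
        (ζ : ℂ) ^ (β₂ - 1) *
        hyp0F1 γ₁ (x * ξ * η) * hyp0F1 γ₂ (y * η * ζ) * hyp0F1 γ₃ (z * ξ * ζ)) =
      ∫ ξ in Ioi (0:ℝ), ∫ η in Ioi (0:ℝ), ∫ ζ in Ioi (0:ℝ), ∑' i : ℕ × ℕ × ℕ,
        hyp0F1Term γ₁ x i.1 * hyp0F1Term γ₂ y i.2.1 * hyp0F1Term γ₃ z i.2.2 *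
          gammaKernel (α + ↑(i.1 + i.2.2)) ξ * gammaKernel (β₁ + ↑(i.1 + i.2.1)) η *
          gammaKernel (β₂ + ↑(i.2.1 + i.2.2)) ζ := by
  refine setIntegral_congr_fun measurableSet_Ioi fun ξ (hξ : 0 < ξ) =>
    setIntegral_congr_fun measurableSet_Ioi fun η (hη : 0 < η) =>
    setIntegral_congr_fun measurableSet_Ioi fun ζ (hζ : 0 < ζ) => ?_
  have hprefactor : (Real.exp (-ξ - η - ζ) : ℂ) * (ξ : ℂ) ^ (α - 1) * (η : ℂ) ^ (β₁ - 1) *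
      (ζ : ℂ) ^ (β₂ - 1) = gammaKernel α ξ * gammaKernel β₁ η * gammaKernel β₂ ζ := by
    rw [gammaKernel, gammaKernel, gammaKernel, show -ξ - η - ζ = -ξ + -η + -ζ by ring,
      Real.exp_add, Real.exp_add]
    push_cast
    ring
  rw [hprefactor]
  simp only [mul_assoc, hyp0F1_mul_eq_tsum]
  rw [tsum_mul_tsum_mul_tsum_of_summable_norm (summable_norm_hyp0F1Term_mul_pow _ _ _)
      (summable_norm_hyp0F1Term_mul_pow _ _ _) (summable_norm_hyp0F1Term_mul_pow _ _ _)]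
  simp only [← tsum_mul_left]
  refine tsum_congr fun ⟨m, n, p⟩ => ?_
  rw [gammaKernel_add_natCast hξ, gammaKernel_add_natCast hη, gammaKernel_add_natCast hζ]
  push_cast
  ring

theorem srivastavaHB_eq_of_hasSum {α β₁ β₂ : ℂ} (hα : 0 < α.re) (hβ₁ : 0 < β₁.re)
    (hβ₂ : 0 < β₂.re) (γ₁ γ₂ γ₃ : ℂ) (x y z : ℝ) {I : ℂ}
    (h : HasSum (fun i : ℕ × ℕ × ℕ =>
      hyp0F1Term γ₁ x i.1 * hyp0F1Term γ₂ y i.2.1 * hyp0F1Term γ₃ z i.2.2 *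
        Gamma (α + ↑(i.1 + i.2.2)) * Gamma (β₁ + ↑(i.1 + i.2.1)) *
        Gamma (β₂ + ↑(i.2.1 + i.2.2))) I) :
    srivastavaHB α β₁ β₂ γ₁ γ₂ γ₃ x y z = I / (Gamma α * Gamma β₁ * Gamma β₂) := by
  have hΓ : Gamma α * Gamma β₁ * Gamma β₂ ≠ 0 :=
    mul_ne_zero (mul_ne_zero (Gamma_ne_zero_of_re_pos hα) (Gamma_ne_zero_of_re_pos hβ₁))
      (Gamma_ne_zero_of_re_pos hβ₂)
  rw [← (h.div_const _).tsum_tsum_tsum_eq]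
  refine tsum_congr fun m => tsum_congr fun n => tsum_congr fun p => ?_
  rw [Gamma_add_natCast_eq_poch_mul hα, Gamma_add_natCast_eq_poch_mul hβ₁,
    Gamma_add_natCast_eq_poch_mul hβ₂, eq_div_iff hΓ]
  simp only [hyp0F1Term, div_eq_mul_inv, mul_inv]
  ring

/-- Integral representation (6.6) for `H_B`, valid for `x, y, z` sufficiently small. -/
theorem srivastavaHB_integral (α β₁ β₂ γ₁ γ₂ γ₃ : ℂ)
    (hα : 0 < α.re) (hβ₁ : 0 < β₁.re) (hβ₂ : 0 < β₂.re) :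
    ∃ ε > (0:ℝ), ∀ x y z : ℝ, |x| < ε → |y| < ε → |z| < ε →
      srivastavaHB α β₁ β₂ γ₁ γ₂ γ₃ x y z =
        (1 / (Complex.Gamma α * Complex.Gamma β₁ * Complex.Gamma β₂)) *
          ∫ ξ in Set.Ioi (0:ℝ), ∫ η in Set.Ioi (0:ℝ), ∫ ζ in Set.Ioi (0:ℝ),
            (Real.exp (-ξ - η - ζ) : ℂ) * (ξ : ℂ) ^ (α - 1) * (η : ℂ) ^ (β₁ - 1) *
              (ζ : ℂ) ^ (β₂ - 1) *
              hyp0F1 γ₁ (x * ξ * η) * hyp0F1 γ₂ (y * η * ζ) *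
              hyp0F1 γ₃ (z * ξ * ζ) := by
  obtain ⟨ε, hε, hsum⟩ := exists_summable_norm_hyp0F1Term_mul_Gamma γ₁ γ₂ γ₃ hα hβ₁ hβ₂
  refine ⟨ε, hε, fun x y z hx hy hz => ?_⟩
  rw [setIntegral_Ioi_hyp0F1_eq_tsum, one_div_mul_eq_div]
  exact srivastavaHB_eq_of_hasSum hα hβ₁ hβ₂ γ₁ γ₂ γ₃ x y z
    (hasSum_setIntegral_Ioi_gammaKernel _ hα hβ₁ hβ₂ _ _ _ (hsum x y z hx hy hz))
end
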